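/- arXiv:1405.4451 — 5 statements merged into one kernel-verified Lean document; each statement's English description precedes it below -/
import Mathlib

section
/- Let M be the (n+1)×(n+1) tridiagonal matrix with diagonal entries M_{k,k} = k(λ₁+λ₂) for k = 0,…,n, superdiagonal entries M_{k,k+1} = -(k+1)λ₁λ₂, and subdiagonal entries M_{k+1,k} = n-k. Then the eigenvalues of M (with multiplicity) are exactly (n-k)λ₁ + kλ₂ for k = 0, 1, …, n. -/
open Polynomial Finset

namespace Stmt0Aux

theorem keyPoly (l1 l2 mu : ℂ) (a b : ℕ) :
    C (((a+b : ℕ) : ℂ)) * X * ((X - C l1)^a * (X - C mu)^b)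
      - (X - C l1) * (X - C l2) * derivative ((X - C l1)^a * (X - C mu)^b)
    = C ((b:ℂ)*l1 + (a:ℂ)*l2) * ((X - C l1)^a * (X - C mu)^b)
      - C ((b:ℂ)*(mu-l2)) * ((X - C l1)^(a+1) * (X - C mu)^(b-1)) := by
  rcases a with _|a <;> rcases b with _|b <;>
  · simp only [derivative_mul, derivative_pow, derivative_X_sub_C, Nat.add_sub_cancel,
      Nat.zero_sub, pow_zero, map_natCast, map_add, _root_.map_mul, map_sub, _root_.map_one,
      map_zero, derivative_X, derivative_C, derivative_one,
      Nat.cast_zero, Nat.cast_add, Nat.cast_one]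
    push_cast
    ring

noncomputable def qp (n : ℕ) (l1 : ℂ) (k : ℕ) : ℂ[X] :=
  (X - C l1) ^ (n - k) * (X - C (l1+1)) ^ k

lemma qp_natDegree_le (n : ℕ) (l1 : ℂ) (k : ℕ) (hk : k ≤ n) : (qp n l1 k).natDegree ≤ n := by
  refine le_trans (natDegree_mul_le) ?_
  rw [natDegree_pow, natDegree_pow, natDegree_X_sub_C, natDegree_X_sub_C]
  omega

lemma qp_coeff_top (n : ℕ) (l1 : ℂ) (k : ℕ) (hk : k ≤ n) : (qp n l1 k).coeff (n+1) = 0 :=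
  coeff_eq_zero_of_natDegree_lt (lt_of_le_of_lt (qp_natDegree_le n l1 k hk) (by omega))

lemma split3 (jv l : ℕ) (A B Cc c : ℂ) :
    (if l = jv then A else if l = jv + 1 then B else if jv = l + 1 then Cc else 0) * c
      = (if l = jv then A * c else 0) + (if l = jv + 1 then B * c else 0)
        + (if jv = l + 1 then Cc * c else 0) := by
  split_ifs <;> first | ring1 | (exfalso; omega)

lemma split2 (kv l : ℕ) (A B c : ℂ) :
    c * (if l = kv then A else if l + 1 = kv then B else 0)
      = (if l = kv then c * A else 0) + (if l + 1 = kv then c * B else 0) := by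
  split_ifs <;> first | ring1 | (exfalso; omega)

lemma hXd (n j : ℕ) (hj : j ≤ n) (q : ℂ[X]) :
    ((n - j : ℕ) : ℂ) * q.coeff j = (n : ℂ) * q.coeff j - (X * derivative q).coeff j := by
  rcases j with _|i
  · simp
  · rw [coeff_X_mul, coeff_derivative, Nat.cast_sub (by omega : i+1 ≤ n)]
    push_cast; ring

lemma sumM (n : ℕ) (l1 l2 : ℂ) (q : ℂ[X]) (hq : q.coeff (n+1) = 0) (j : ℕ) (hj : j ≤ n) :
    (∑ l ∈ range (n+1),
      (if l = j then (j : ℂ) * (l1+l2) else if l = j + 1 then -((j:ℂ)+1) * l1 * l2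
        else if j = l + 1 then ((n - l : ℕ) : ℂ) else 0) * q.coeff l)
    = (C ((n : ℕ) : ℂ) * X * q - (X - C l1) * (X - C l2) * derivative q).coeff j := by
  have hexp : (X - C l1) * (X - C l2) * derivative q
      = X * (X * derivative q) - C (l1+l2) * (X * derivative q) + C (l1*l2) * derivative q := by
    rw [map_add, _root_.map_mul]; ring
  simp only [split3]
  rw [Finset.sum_add_distrib, Finset.sum_add_distrib, Finset.sum_ite_eq', Finset.sum_ite_eq',
    if_pos (Finset.mem_range.2 (by omega : j < n + 1))]
  have h2 : (if j + 1 ∈ range (n+1) then -((j:ℂ)+1) * l1 * l2 * q.coeff (j+1) else 0)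
      = -((j:ℂ)+1) * l1 * l2 * q.coeff (j+1) := by
    by_cases h : j + 1 ∈ range (n+1)
    · rw [if_pos h]
    · rw [if_neg h]
      have : j = n := by simp only [Finset.mem_range] at h; omega
      rw [this, hq, mul_zero]
  rw [h2, hexp]
  rcases j with _|i
  · have h3 : ∑ l ∈ range (n+1), (if (0:ℕ) = l + 1 then ((n - l : ℕ) : ℂ) * q.coeff l else 0)
        = 0 := Finset.sum_eq_zero (fun l _ => by simp)
    rw [h3]
    simp only [coeff_sub, coeff_add, coeff_C_mul, mul_assoc, coeff_C_mul, mul_coeff_zero,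
      coeff_X_zero, coeff_derivative, Nat.cast_zero, coeff_C_zero]
    push_cast
    ring
  · have h3 : ∑ l ∈ range (n+1), (if i + 1 = l + 1 then ((n - l : ℕ) : ℂ) * q.coeff l else 0)
        = ((n - i : ℕ) : ℂ) * q.coeff i := by
      rw [show (∑ l ∈ range (n+1), (if i + 1 = l + 1 then ((n - l : ℕ) : ℂ) * q.coeff l else 0))
          = ∑ l ∈ range (n+1), (if l = i then ((n - l : ℕ) : ℂ) * q.coeff l else 0) from
        Finset.sum_congr rfl (fun l _ => if_congr (by omega) rfl rfl),
        Finset.sum_ite_eq', if_pos (Finset.mem_range.2 (by omega : i < n + 1))]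
    rw [h3, hXd n i (by omega) q]
    simp only [coeff_sub, coeff_add, mul_assoc, coeff_C_mul, coeff_X_mul, coeff_derivative]
    push_cast
    ring

lemma sumT (n : ℕ) (f : ℕ → ℂ) (A B : ℂ) (k : ℕ) (hk : k ≤ n) :
    ∑ l ∈ range (n+1), f l * (if l = k then A else if l + 1 = k then B else 0)
      = f k * A + (if k = 0 then 0 else f (k-1) * B) := by
  simp only [split2]
  rw [Finset.sum_add_distrib, Finset.sum_ite_eq',
    if_pos (Finset.mem_range.2 (by omega : k < n + 1))]
  congr 1
  rcases k with _|k'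
  · simp
  · rw [show (∑ l ∈ range (n+1), (if l + 1 = k' + 1 then f l * B else 0))
        = ∑ l ∈ range (n+1), (if l = k' then f l * B else 0) from
      Finset.sum_congr rfl (fun l _ => if_congr (by omega) rfl rfl),
      Finset.sum_ite_eq', if_pos (Finset.mem_range.2 (by omega : k' < n + 1))]
    simp

lemma core (n : ℕ) (l1 l2 : ℂ) (j k : ℕ) (hj : j ≤ n) (hk : k ≤ n) :
    (∑ l ∈ range (n+1),
      (if l = j then (j : ℂ) * (l1+l2) else if l = j + 1 then -((j:ℂ)+1) * l1 * l2
        else if j = l + 1 then ((n - l : ℕ) : ℂ) else 0) * (qp n l1 k).coeff l)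
    = ∑ l ∈ range (n+1), (qp n l1 l).coeff j *
        (if l = k then ((k : ℕ) : ℂ) * l1 + ((n - k : ℕ) : ℂ) * l2
         else if l + 1 = k then -(k : ℂ) * (l1 + 1 - l2) else 0) := by
  rw [sumM n l1 l2 _ (qp_coeff_top n l1 k hk) j hj, sumT n _ _ _ k hk]
  have hkey := keyPoly l1 l2 (l1+1) (n-k) k
  rw [Nat.sub_add_cancel hk] at hkey
  have hco := congrArg (fun p => p.coeff j) hkey
  rw [show (X - C l1) ^ (n-k) * (X - C (l1+1)) ^ k = qp n l1 k from rfl] at hco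
  rw [hco, coeff_sub, coeff_C_mul, coeff_C_mul]
  rcases k with _|k'
  · simp [mul_comm]
  · rw [show n - (k'+1) + 1 = n - k' by omega, show k' + 1 - 1 = k' by omega,
      show (X - C l1) ^ (n-k') * (X - C (l1+1)) ^ k' = qp n l1 k' from rfl]
    simp only [if_neg (Nat.succ_ne_zero k')]
    push_cast
    ring

noncomputable def Pm (n : ℕ) (l1 : ℂ) : Matrix (Fin (n+1)) (Fin (n+1)) ℂ :=
  Matrix.of fun j k => (qp n l1 (k:ℕ)).coeff (j:ℕ)

noncomputable def Tm (n : ℕ) (l1 l2 : ℂ) : Matrix (Fin (n+1)) (Fin (n+1)) ℂ :=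
  Matrix.of fun j k =>
    if (j:ℕ) = (k:ℕ) then ((k:ℕ) : ℂ) * l1 + ((n - (k:ℕ) : ℕ) : ℂ) * l2
    else if (j:ℕ) + 1 = (k:ℕ) then -(((k:ℕ)) : ℂ) * (l1 + 1 - l2) else 0

lemma MP_eq_PT (n : ℕ) (l1 l2 : ℂ) :
    (Matrix.of fun k l : Fin (n + 1) =>
      if (l : ℕ) = (k : ℕ) then (k : ℂ) * (l1 + l2)
      else if (l : ℕ) = (k : ℕ) + 1 then -(((k : ℕ) + 1 : ℂ)) * l1 * l2
      else if (k : ℕ) = (l : ℕ) + 1 then ((n - (l : ℕ) : ℕ) : ℂ)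
      else 0) * Pm n l1 = Pm n l1 * Tm n l1 l2 := by
  ext j k
  rw [Matrix.mul_apply, Matrix.mul_apply]
  exact (Fin.sum_univ_eq_sum_range (fun m => (if m = (j:ℕ) then ((j:ℕ) : ℂ) * (l1+l2)
          else if m = (j:ℕ) + 1 then -(((j:ℕ):ℂ)+1) * l1 * l2
          else if (j:ℕ) = m + 1 then ((n - m : ℕ) : ℂ) else 0) * (qp n l1 (k:ℕ)).coeff m)
      (n+1)).trans ((core n l1 l2 (j:ℕ) (k:ℕ) (by omega) (by omega)).trans
      (Fin.sum_univ_eq_sum_range (fun m => (qp n l1 m).coeff (j:ℕ) *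
        (if m = (k:ℕ) then ((k:ℕ) : ℂ) * l1 + ((n - (k:ℕ) : ℕ) : ℂ) * l2
         else if m + 1 = (k:ℕ) then -(((k:ℕ)) : ℂ) * (l1 + 1 - l2) else 0)) (n+1)).symm)

lemma qp_expand (n : ℕ) (l1 : ℂ) (k : ℕ) (hk : k ≤ n) :
    qp n l1 k
      = ∑ j ∈ range (n+1), C ((-1:ℂ)^j * ((k.choose j : ℕ) : ℂ)) * (X - C l1)^(n - j) := by
  have h1 : X - C (l1+1) = (X - C l1) - 1 := by rw [map_add, C_1]; ring
  have hexp := sub_pow (X - C l1) (1 : ℂ[X]) k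
  rw [qp, h1, hexp, Finset.mul_sum]
  symm
  rw [← Finset.sum_subset (Finset.range_subset_range.2 (by omega : k+1 ≤ n+1))
      (fun x _ hx => by
        rw [Nat.choose_eq_zero_of_lt (by simp only [Finset.mem_range] at hx ⊢; omega)]
        simp)]
  rw [← Finset.sum_range_reflect]
  refine Finset.sum_congr rfl (fun m hm => ?_)
  simp only [Finset.mem_range] at hm
  rw [Nat.add_sub_cancel]
  have hmk : m ≤ k := by omega
  rw [Nat.choose_symm hmk, show n - (k - m) = (n - k) + m by omega, pow_add]
  have hsgn : (-1:ℂ)^(k-m) = (-1)^(m+k) := by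
    rw [show m + k = (k - m) + 2*m by omega, pow_add, pow_mul]
    simp
  rw [hsgn]
  simp only [_root_.map_mul, map_pow, map_neg, _root_.map_one, map_natCast, one_pow, mul_one]
  ring

noncomputable def Em (n : ℕ) (l1 : ℂ) : Matrix (Fin (n+1)) (Fin (n+1)) ℂ :=
  Matrix.of fun i j => ((X - C l1)^(n - (j:ℕ))).coeff (i:ℕ)

noncomputable def Bm (n : ℕ) : Matrix (Fin (n+1)) (Fin (n+1)) ℂ :=
  Matrix.of fun j k => (-1:ℂ)^(j:ℕ) * (((k:ℕ).choose (j:ℕ) : ℕ) : ℂ)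

lemma Pm_eq (n : ℕ) (l1 : ℂ) : Pm n l1 = Em n l1 * Bm n := by
  ext i k
  rw [Matrix.mul_apply]
  show (qp n l1 (k:ℕ)).coeff (i:ℕ) = _
  rw [qp_expand n l1 (k:ℕ) (by omega), finset_sum_coeff]
  refine (Finset.sum_congr rfl (fun m _ => by rw [coeff_C_mul])).trans ?_
  refine (Fin.sum_univ_eq_sum_range
    (fun m => (-1:ℂ)^m * (((k:ℕ).choose m : ℕ) : ℂ) * ((X - C l1)^(n - m)).coeff (i:ℕ))
    (n+1)).symm.trans ?_
  exact Finset.sum_congr rfl (fun l _ => by show _ = ((X - C l1)^(n - (l:ℕ))).coeff (i:ℕ) * ((-1:ℂ)^(l:ℕ) * (((k:ℕ).choose (l:ℕ) : ℕ) : ℂ)); ring)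

lemma Em_isUnit (n : ℕ) (l1 : ℂ) : IsUnit (Em n l1).det := by
  have hE : Em n l1 = ((Em n l1).submatrix id Fin.revPerm).submatrix id Fin.revPerm := by
    ext i j
    simp [Matrix.submatrix_apply, Fin.revPerm, Fin.rev_rev]
  have htri : ((Em n l1).submatrix id Fin.revPerm).BlockTriangular id := by
    intro i j hij
    simp only [id_eq] at hij
    simp only [Matrix.submatrix_apply, id_eq, Em, Matrix.of_apply, Fin.revPerm_apply]
    refine coeff_eq_zero_of_natDegree_lt ?_
    have : ((Fin.rev j : Fin (n+1)) : ℕ) = n - (j:ℕ) := by rw [Fin.val_rev]; omega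
    rw [natDegree_pow, natDegree_X_sub_C, mul_one, this]
    omega
  have hdiag : ((Em n l1).submatrix id Fin.revPerm).det = 1 := by
    rw [Matrix.det_of_upperTriangular htri]
    refine Finset.prod_eq_one (fun i _ => ?_)
    simp only [Matrix.submatrix_apply, id_eq, Em, Matrix.of_apply, Fin.revPerm_apply]
    have hrv : ((Fin.rev i : Fin (n+1)) : ℕ) = n - (i:ℕ) := by rw [Fin.val_rev]; omega
    rw [hrv, show n - (n - (i:ℕ)) = (i:ℕ) by omega]
    have hm : ((X - C l1)^(i:ℕ)).Monic := (monic_X_sub_C l1).pow _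
    have hnd : ((X - C l1)^(i:ℕ)).natDegree = (i:ℕ) := by
      rw [natDegree_pow, natDegree_X_sub_C, mul_one]
    have := hm.coeff_natDegree
    rwa [hnd] at this
  rw [hE, Matrix.det_permute' Fin.revPerm _, hdiag, mul_one]
  rcases Int.units_eq_one_or (Equiv.Perm.sign (Fin.revPerm : Equiv.Perm (Fin (n+1)))) with h | h <;>
    rw [h] <;> simp

lemma Bm_isUnit (n : ℕ) : IsUnit (Bm n).det := by
  have htri : (Bm n).BlockTriangular id := by
    intro i j hij
    simp only [id_eq] at hij
    simp only [Bm, Matrix.of_apply]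
    rw [Nat.choose_eq_zero_of_lt hij]
    simp
  rw [Matrix.det_of_upperTriangular htri]
  refine isUnit_iff_ne_zero.2 (Finset.prod_ne_zero_iff.2 (fun i _ => ?_))
  simp only [Bm, Matrix.of_apply, Nat.choose_self]
  simp

lemma charpoly_eq_of_conj {m : Type*} [DecidableEq m] [Fintype m]
    (A P T : Matrix m m ℂ) (hP : IsUnit P.det) (h : A * P = P * T) :
    A.charpoly = T.charpoly := by
  have h1 : A.charmatrix * P.map (C : ℂ →+* ℂ[X])
      = P.map (C : ℂ →+* ℂ[X]) * T.charmatrix := by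
    rw [Matrix.charmatrix, Matrix.charmatrix, sub_mul, mul_sub]
    congr 1
    · exact ((Matrix.scalar_commute X (fun r => Commute.all _ _) (P.map C))).eq
    · rw [RingHom.mapMatrix_apply, RingHom.mapMatrix_apply, ← Matrix.map_mul, h, Matrix.map_mul]
  have h2 := congrArg Matrix.det h1
  rw [Matrix.det_mul, Matrix.det_mul] at h2
  have hPC : (P.map (C : ℂ →+* ℂ[X])).det = C P.det := by
    rw [← RingHom.mapMatrix_apply, ← RingHom.map_det]
  have hC : (C P.det : ℂ[X]) ≠ 0 := C_ne_zero.2 hP.ne_zero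
  rw [Matrix.charpoly, Matrix.charpoly]
  rw [hPC] at h2
  exact mul_right_cancel₀ hC (h2.trans (mul_comm _ _))

end Stmt0Aux

open Stmt0Aux in
/-- The tridiagonal matrix `M` with `M_{k,k} = k(λ₁+λ₂)`, `M_{k,k+1} = -(k+1)λ₁λ₂`,
`M_{k+1,k} = n-k` has eigenvalues `(n-k)λ₁ + kλ₂`, `k = 0,…,n`, i.e. its characteristic
polynomial is `∏_{k=0}^{n} (X - ((n-k)λ₁ + kλ₂))`. -/
theorem stmt_0 (n : ℕ) (lam1 lam2 : ℂ)
    (M : Matrix (Fin (n + 1)) (Fin (n + 1)) ℂ)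
    (hM : M = Matrix.of fun k l : Fin (n + 1) =>
      if (l : ℕ) = (k : ℕ) then (k : ℂ) * (lam1 + lam2)
      else if (l : ℕ) = (k : ℕ) + 1 then -(((k : ℕ) + 1 : ℂ)) * lam1 * lam2
      else if (k : ℕ) = (l : ℕ) + 1 then ((n - (l : ℕ) : ℕ) : ℂ)
      else 0) :
    M.charpoly =
      ∏ k ∈ Finset.range (n + 1),
        (X - C (((n - k : ℕ) : ℂ) * lam1 + (k : ℂ) * lam2)) := by
  have hMP := MP_eq_PT n lam1 lam2
  rw [← hM] at hMP
  have hPunit : IsUnit (Pm n lam1).det := by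
    rw [Pm_eq, Matrix.det_mul]
    exact (Em_isUnit n lam1).mul (Bm_isUnit n)
  have htri : (Tm n lam1 lam2).BlockTriangular id := by
    intro i j hij
    simp only [id_eq] at hij
    simp only [Tm, Matrix.of_apply]
    rw [if_neg (by omega), if_neg (by omega)]
  rw [charpoly_eq_of_conj M (Pm n lam1) (Tm n lam1 lam2) hPunit hMP,
    Matrix.charpoly_of_upperTriangular _ htri]
  have hdiag : ∀ i : Fin (n+1), X - C (Tm n lam1 lam2 i i)
      = X - C ((((i:ℕ)) : ℂ) * lam1 + ((n - (i:ℕ) : ℕ) : ℂ) * lam2) := by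
    intro i
    simp [Tm]
  rw [Finset.prod_congr rfl (fun i _ => hdiag i)]
  refine (Fin.prod_univ_eq_prod_range
    (fun m => X - C ((m : ℂ) * lam1 + ((n - m : ℕ) : ℂ) * lam2)) (n+1)).trans ?_
  rw [← Finset.prod_range_reflect
    (fun k => X - C (((n - k : ℕ) : ℂ) * lam1 + (k : ℂ) * lam2)) (n+1)]
  refine Finset.prod_congr rfl (fun j hj => ?_)
  simp only [Finset.mem_range] at hj
  rw [show n + 1 - 1 - j = n - j by omega, show n - (n - j) = j by omega]
end

section
/- For nonzero λ₁ with z = λ₂/λ₁ and fixed k with 0 ≤ k ≤ n, the vector v with entries v_l = Σ_j C(n-k, l-j)·C(k, j)·z^j (sum over max{0, k+l-n} ≤ j ≤ min{k,l}) is an eigenvector of the matrix M' with eigenvalue λ₁(kz + (n-k)), where M' is the (n+1)×(n+1) tridiagonal matrix with M'_{l,l} = l(λ₁+λ₂), M'_{l,l+1} = (l+1)λ₁, and M'_{l+1,l} = -(n-l)λ₂. -/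
open Polynomial Finset

lemma coeff_one_add_CzX_pow (z : ℂ) (k j : ℕ) :
    ((1 + C z * X) ^ k).coeff j = (k.choose j : ℂ) * z ^ j := by
  induction k generalizing j with
  | zero => cases j <;> simp [coeff_one]
  | succ k ih =>
    have h : (1 + C z * X) ^ (k+1) = (1 + C z * X)^k + ((1 + C z * X)^k * X) * C z := by ring
    rw [h]
    cases j with
    | zero => simp [ih, coeff_mul_C, mul_coeff_zero]
    | succ j =>
      rw [coeff_add, coeff_mul_C, coeff_mul_X, ih, ih, Nat.choose_succ_succ]
      push_cast; ring

lemma coeffQ (z : ℂ) (a k l : ℕ) :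
    ((1+X)^a * (1 + C z * X)^k : ℂ[X]).coeff l
      = ∑ j ∈ range (l+1), (a.choose (l-j) : ℂ) * (k.choose j : ℂ) * z ^ j := by
  rw [coeff_mul, Finset.Nat.sum_antidiagonal_eq_sum_range_succ_mk,
    ← Finset.sum_range_reflect]
  refine Finset.sum_congr rfl fun j hj => ?_
  rw [mem_range] at hj
  have h1 : l + 1 - 1 - j = l - j := by omega
  have h2 : l - (l - j) = j := by omega
  rw [h1, h2, coeff_one_add_X_pow, coeff_one_add_CzX_pow]
  ring

lemma cancel_pow (m : ℕ) (p : ℂ[X]) : p * (C (m:ℂ) * p^(m-1)) = C (m:ℂ) * p^m := by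
  cases m with
  | zero => simp
  | succ m => rw [Nat.succ_sub_one, pow_succ]; push_cast; ring

lemma hder (z : ℂ) (a k : ℕ) :
    derivative ((1+X)^a * (1 + C z * X)^k : ℂ[X])
      + X * derivative ((1+X)^a * (1 + C z * X)^k)
      + C z * (X * derivative ((1+X)^a * (1 + C z * X)^k))
      + C z * (X * (X * derivative ((1+X)^a * (1 + C z * X)^k)))
    = C (a:ℂ) * ((1+X)^a * (1 + C z * X)^k)
      + C (k:ℂ) * C z * ((1+X)^a * (1 + C z * X)^k)
      + (C (a:ℂ) * C z + C (k:ℂ) * C z) * (X * ((1+X)^a * (1 + C z * X)^k)) := by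
  have hda : derivative ((1+X : ℂ[X])) = 1 := by simp
  have hdz : derivative ((1 + C z * X : ℂ[X])) = C z := by simp
  have e1 := cancel_pow a (1+X : ℂ[X])
  have e2 := cancel_pow k (1 + C z * X : ℂ[X])
  rw [derivative_mul, derivative_pow, derivative_pow, hda, hdz]
  linear_combination ((1 + C z * X:ℂ[X])^k * (1 + C z * X)) * e1
    + ((1+X:ℂ[X])^a * (1+X) * C z) * e2


lemma coeff_X_mul_zero' (p : ℂ[X]) : (X * p).coeff 0 = 0 := by
  simp [mul_coeff_zero]

lemma hrec0 (z : ℂ) (a k : ℕ) :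
    ((1+X)^a * (1 + C z * X)^k : ℂ[X]).coeff 1
      = ((a:ℂ) + (k:ℂ) * z) * ((1+X)^a * (1 + C z * X)^k : ℂ[X]).coeff 0 := by
  have H := hder z a k
  simp only [← C_mul, ← C_add] at H
  have h := congrArg (fun p : ℂ[X] => p.coeff 0) H
  simp only [coeff_add, coeff_C_mul, coeff_X_mul_zero', coeff_derivative,
    mul_zero, add_zero, Nat.cast_zero, zero_add] at h
  push_cast at h ⊢
  linear_combination h

lemma hrec (z : ℂ) (a k t : ℕ) :
    ((t:ℂ)+2) * ((1+X)^a * (1 + C z * X)^k : ℂ[X]).coeff (t+2)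
      + (1+z) * ((t:ℂ)+1) * ((1+X)^a * (1 + C z * X)^k : ℂ[X]).coeff (t+1)
      + z * (t:ℂ) * ((1+X)^a * (1 + C z * X)^k : ℂ[X]).coeff t
    = ((a:ℂ) + (k:ℂ)*z) * ((1+X)^a * (1 + C z * X)^k : ℂ[X]).coeff (t+1)
      + ((a:ℂ) + (k:ℂ)) * z * ((1+X)^a * (1 + C z * X)^k : ℂ[X]).coeff t := by
  have H := hder z a k
  simp only [← C_mul, ← C_add] at H
  have h := congrArg (fun p : ℂ[X] => p.coeff (t+1)) H
  simp only [coeff_add, coeff_C_mul, coeff_X_mul, coeff_derivative] at h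
  cases t with
  | zero =>
    simp only [coeff_X_mul_zero', Nat.cast_zero, Nat.cast_one, mul_zero, add_zero,
      zero_add] at h ⊢
    push_cast at h ⊢
    linear_combination h
  | succ s =>
    simp only [coeff_X_mul, coeff_derivative] at h
    push_cast at h ⊢
    linear_combination h


/-- For `λ₁ ≠ 0`, `z = λ₂/λ₁` and `0 ≤ k ≤ n`, the vector with entries
`v_l = Σ_j C(n-k, l-j) C(k, j) z^j` is an eigenvector of the tridiagonal matrix `M'`
(with `M'_{l,l} = l(λ₁+λ₂)`, `M'_{l,l+1} = (l+1)λ₁`, `M'_{l+1,l} = -(n-l)λ₂`)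
with eigenvalue `λ₁(kz + (n-k))`. -/
theorem stmt_1 (n k : ℕ) (hk : k ≤ n) (lam1 lam2 : ℂ) (h1 : lam1 ≠ 0)
    (z : ℂ) (hz : z = lam2 / lam1)
    (M' : Matrix (Fin (n + 1)) (Fin (n + 1)) ℂ)
    (hM' : M' = Matrix.of fun l m : Fin (n + 1) =>
      if (m : ℕ) = (l : ℕ) then (l : ℂ) * (lam1 + lam2)
      else if (m : ℕ) = (l : ℕ) + 1 then ((l : ℕ) + 1 : ℂ) * lam1
      else if (l : ℕ) = (m : ℕ) + 1 then -((n - (m : ℕ) : ℕ) : ℂ) * lam2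
      else 0)
    (v : Fin (n + 1) → ℂ)
    (hv : v = fun l : Fin (n + 1) =>
      ∑ j ∈ Finset.Icc (k + (l : ℕ) - n) (min k (l : ℕ)),
        ((n - k).choose ((l : ℕ) - j) : ℂ) * (k.choose j : ℂ) * z ^ j) :
    v ≠ 0 ∧ M'.mulVec v = (lam1 * ((k : ℂ) * z + ((n - k : ℕ) : ℂ))) • v := by
  have hl2 : lam2 = lam1 * z := by rw [hz]; field_simp
  set a := n - k with ha
  set Q : ℂ[X] := (1+X)^a * (1 + C z * X)^k with hQdef
  -- v agrees with coefficients of Q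
  have hvc : ∀ l : Fin (n+1), v l = Q.coeff (l : ℕ) := by
    intro l
    have hl : (l : ℕ) ≤ n := Nat.lt_succ_iff.mp l.isLt
    rw [hv, hQdef, coeffQ]
    refine Finset.sum_subset ?_ ?_
    · intro j hj
      rw [Finset.mem_Icc] at hj
      rw [Finset.mem_range]
      omega
    · intro j hj hj2
      rw [Finset.mem_range] at hj
      rw [Finset.mem_Icc] at hj2
      rcases Nat.lt_or_ge k j with h | h
      · simp [Nat.choose_eq_zero_of_lt h]
      · have : a < (l:ℕ) - j := by omega
        simp [Nat.choose_eq_zero_of_lt this]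
  have hc0 : Q.coeff 0 = 1 := by
    rw [hQdef, coeffQ]; simp
  have hctop : Q.coeff (n+1) = 0 := by
    apply coeff_eq_zero_of_natDegree_lt
    have h1' : (1 + X : ℂ[X]).natDegree ≤ 1 := by
      apply le_trans (natDegree_add_le _ _); simp
    have h2' : (1 + C z * X : ℂ[X]).natDegree ≤ 1 := by
      apply le_trans (natDegree_add_le _ _)
      simp [natDegree_C_mul_le]
      exact le_trans (natDegree_mul_le) (by simp)
    calc Q.natDegree ≤ ((1+X:ℂ[X])^a).natDegree + ((1 + C z * X:ℂ[X])^k).natDegree :=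
          natDegree_mul_le
      _ ≤ a * 1 + k * 1 := by
          gcongr
          · exact le_trans (natDegree_pow_le) (by nlinarith [h1'])
          · exact le_trans (natDegree_pow_le) (by nlinarith [h2'])
      _ ≤ n := by omega
      _ < n + 1 := Nat.lt_succ_self n
  have hak : (a : ℂ) + (k : ℂ) = (n : ℂ) := by
    have : ((a + k : ℕ) : ℂ) = (n : ℂ) := by rw [show a + k = n from by omega]
    push_cast at this; exact this
  constructor
  · intro h
    have h0 := congrFun h ⟨0, n.succ_pos⟩
    rw [hvc] at h0
    simp [hc0] at h0
  · funext l
    have hl : (l : ℕ) ≤ n := Nat.lt_succ_iff.mp l.isLt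
    have hmv : M'.mulVec v l = ∑ m : Fin (n+1), M' l m * v m := by
      simp [Matrix.mulVec, dotProduct]
    have key : ∀ (m : Fin (n+1)), M' l m * v m =
        (if (m:ℕ) = (l:ℕ) then ((l:ℕ):ℂ)*(lam1+lam2) * Q.coeff (m:ℕ) else 0)
        + (if (m:ℕ) = (l:ℕ)+1 then (((l:ℕ):ℂ)+1)*lam1 * Q.coeff (m:ℕ) else 0)
        + (if (l:ℕ) = (m:ℕ)+1 then -(((n - (m:ℕ) : ℕ)):ℂ)*lam2 * Q.coeff (m:ℕ) else 0) := by
      intro m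
      rw [hM', hvc]
      simp only [Matrix.of_apply]
      split_ifs <;> first | ring1 | (exfalso; omega)
    rw [hmv]
    simp only [key]
    rw [Finset.sum_add_distrib, Finset.sum_add_distrib]
    rw [Fin.sum_univ_eq_sum_range
      (fun i => if i = (l:ℕ) then ((l:ℕ):ℂ)*(lam1+lam2) * Q.coeff i else 0),
      Fin.sum_univ_eq_sum_range
      (fun i => if i = (l:ℕ)+1 then (((l:ℕ):ℂ)+1)*lam1 * Q.coeff i else 0),
      Fin.sum_univ_eq_sum_range
      (fun i => if (l:ℕ) = i+1 then -(((n - i : ℕ)):ℂ)*lam2 * Q.coeff i else 0)]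
    rw [Finset.sum_ite_eq' (Finset.range (n+1)) ((l:ℕ)),
      Finset.sum_ite_eq' (Finset.range (n+1)) ((l:ℕ)+1)]
    have hS1 : (if (l:ℕ) ∈ Finset.range (n+1) then ((l:ℕ):ℂ)*(lam1+lam2) * Q.coeff (l:ℕ) else 0)
        = ((l:ℕ):ℂ)*(lam1+lam2) * Q.coeff (l:ℕ) := by
      rw [if_pos (Finset.mem_range.mpr (by omega))]
    have hS2 : (if (l:ℕ)+1 ∈ Finset.range (n+1) then (((l:ℕ):ℂ)+1)*lam1 * Q.coeff ((l:ℕ)+1) else 0)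
        = (((l:ℕ):ℂ)+1)*lam1 * Q.coeff ((l:ℕ)+1) := by
      rcases Nat.lt_or_ge (l:ℕ) n with h | h
      · rw [if_pos (Finset.mem_range.mpr (by omega))]
      · have hln : (l:ℕ) = n := by omega
        rw [if_neg (by simp [hln]), hln, hctop]
        ring
    rw [hS1, hS2]
    simp only [Pi.smul_apply, smul_eq_mul]
    rw [hvc]
    rcases Nat.eq_zero_or_eq_succ_pred (l:ℕ) with h0 | hsucc
    · have hz3 : ∑ i ∈ Finset.range (n+1),
          (if (l:ℕ) = i+1 then -(((n - i : ℕ)):ℂ)*lam2 * Q.coeff i else 0) = 0 := by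
        apply Finset.sum_eq_zero
        intro i _
        rw [if_neg (by omega)]
      rw [hz3, h0]
      have hr0 := hrec0 z a k
      rw [← hQdef] at hr0
      simp only [Nat.cast_zero]
      linear_combination lam1 * hr0
    · set t := (l:ℕ) - 1 with ht
      have hlt : (l:ℕ) = t + 1 := hsucc
      have htn : t ≤ n := by omega
      have hz3 : ∑ i ∈ Finset.range (n+1),
          (if (l:ℕ) = i+1 then -(((n - i : ℕ)):ℂ)*lam2 * Q.coeff i else 0)
          = -(((n - t : ℕ)):ℂ)*lam2 * Q.coeff t := by
        have hcong : ∀ i ∈ Finset.range (n+1),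
            (if (l:ℕ) = i+1 then -(((n - i : ℕ)):ℂ)*lam2 * Q.coeff i else 0)
            = (if t = i then -(((n - i : ℕ)):ℂ)*lam2 * Q.coeff i else 0) := by
          intro i _
          simp only [show ((l:ℕ) = i+1) ↔ (t = i) from by omega]
        rw [Finset.sum_congr rfl hcong, Finset.sum_ite_eq,
          if_pos (Finset.mem_range.mpr (by omega))]
      rw [hz3, hlt]
      have hr := hrec z a k t
      rw [← hQdef] at hr
      have hcast : ((n - t : ℕ):ℂ) = (n:ℂ) - (t:ℂ) := by
        push_cast [htn]; ring
      rw [hcast, hl2]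
      push_cast
      linear_combination lam1 * hr + lam1 * z * Q.coeff t * hak
end

section
/- The functions sin^n x, sin^{n-1}x·cos x, …, sin x·cos^{n-1} x, cos^n x are linearly independent over the field of rational functions ℂ(x): if q₀(x),…,q_n(x) are rational functions with Σ_{j=0}^{n} q_j(x)·sin^{n-j}(x)·cos^j(x) = 0 for all real x (away from poles of the q_j), then all q_j are identically zero. -/
open Polynomial

/-- The functions `sin^n x, sin^{n-1} x · cos x, …, cos^n x` are linearly independent over
the field `ℂ(x)` of rational functions: if rational functions `q₀, …, q_n` satisfy
`Σ_j q_j(x) sin^{n-j}(x) cos^j(x) = 0` for all real `x` away from the poles of the `q_j`,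
then all `q_j` vanish identically. -/
theorem stmt_4 (n : ℕ) (q : Fin (n + 1) → RatFunc ℂ)
    (h : ∀ x : ℝ, (∀ j : Fin (n + 1), Polynomial.eval (x : ℂ) (q j).denom ≠ 0) →
      ∑ j : Fin (n + 1),
        (q j).eval (RingHom.id ℂ) (x : ℂ)
          * Complex.sin x ^ (n - (j : ℕ)) * Complex.cos x ^ (j : ℕ) = 0) :
    ∀ j : Fin (n + 1), q j = 0 := by
  classical
  set p : Fin (n + 1) → Polynomial ℂ :=
    fun j => (q j).num * ∏ k ∈ Finset.univ.erase j, (q k).denom with hp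
  have heval2 : ∀ (j : Fin (n+1)) (z : ℂ), Polynomial.eval₂ (RingHom.id ℂ) z = Polynomial.eval z := by
    intro j z; rfl
  -- Step 1: for each real t, the polynomial ∑ C(t^(n-j)) * p j is zero
  have key : ∀ t : ℝ,
      (∑ j : Fin (n + 1), Polynomial.C ((t : ℂ) ^ (n - (j : ℕ))) * p j) = 0 := by
    intro t
    apply Polynomial.eq_zero_of_infinite_isRoot
    set f : ℕ → ℂ := fun m => ((Real.arctan t + m * Real.pi : ℝ) : ℂ) with hf
    have hfinj : Function.Injective f := by
      intro a b hab
      simp only [hf] at hab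
      have h1 : Real.arctan t + (a:ℝ) * Real.pi = Real.arctan t + (b:ℝ) * Real.pi := by
        exact_mod_cast hab
      have h2 : (a:ℝ) * Real.pi = (b:ℝ) * Real.pi := by linarith
      exact_mod_cast mul_right_cancel₀ Real.pi_ne_zero h2
    -- bad m's are finite
    have hbad : {m : ℕ | ∃ j : Fin (n+1), Polynomial.eval (f m) (q j).denom = 0}.Finite := by
      have : {m : ℕ | ∃ j : Fin (n+1), Polynomial.eval (f m) (q j).denom = 0}
          ⊆ f ⁻¹' (⋃ j : Fin (n+1), {z : ℂ | (q j).denom.IsRoot z}) := by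
        intro m hm
        obtain ⟨j, hj⟩ := hm
        exact Set.mem_preimage.2 (Set.mem_iUnion.2 ⟨j, hj⟩)
      refine Set.Finite.subset (Set.Finite.preimage hfinj.injOn ?_) this
      exact Set.finite_iUnion fun j => Polynomial.finite_setOf_isRoot (RatFunc.denom_ne_zero _)
    have hgoodinf : {m : ℕ | ∀ j : Fin (n+1), Polynomial.eval (f m) (q j).denom ≠ 0}.Infinite := by
      have := hbad.infinite_compl
      convert this using 1
      ext m; simp [not_exists]
    refine Set.Infinite.mono ?_ (hgoodinf.image hfinj.injOn)
    rintro z ⟨m, hm, rfl⟩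
    -- now show f m is a root
    set x : ℝ := Real.arctan t + m * Real.pi with hx
    have hcosx : Real.cos x ≠ 0 := by
      have : Real.cos x = (-1) ^ (m : ℤ) * Real.cos (Real.arctan t) := by
        rw [hx]; exact_mod_cast Real.cos_add_int_mul_pi (Real.arctan t) m
      rw [this]
      exact mul_ne_zero (by simp) (Real.cos_arctan_pos t).ne'
    have hsinx : Real.sin x = t * Real.cos x := by
      have h1 : Real.sin x = (-1) ^ (m : ℤ) * Real.sin (Real.arctan t) := by
        rw [hx]; exact_mod_cast Real.sin_add_int_mul_pi (Real.arctan t) m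
      have h2 : Real.cos x = (-1) ^ (m : ℤ) * Real.cos (Real.arctan t) := by
        rw [hx]; exact_mod_cast Real.cos_add_int_mul_pi (Real.arctan t) m
      have h3 : Real.sin (Real.arctan t) = t * Real.cos (Real.arctan t) := by
        rw [Real.sin_arctan, Real.cos_arctan]; ring
      rw [h1, h2, h3]; ring
    have hx0 := h x hm
    -- rewrite sin and cos
    have hsinC : Complex.sin x = (t : ℂ) * Complex.cos x := by
      rw [← Complex.ofReal_sin, ← Complex.ofReal_cos, hsinx]; push_cast; ring
    have hcosC : Complex.cos (x : ℂ) ≠ 0 := by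
      rw [← Complex.ofReal_cos]; exact_mod_cast hcosx
    have hsum : (∑ j : Fin (n + 1),
        (q j).eval (RingHom.id ℂ) (x : ℂ) * (t : ℂ) ^ (n - (j : ℕ)))
          * Complex.cos (x:ℂ) ^ n = 0 := by
      rw [← hx0, Finset.sum_mul]
      refine Finset.sum_congr rfl fun j _ => ?_
      rw [hsinC, mul_pow]
      have : (n - (j:ℕ)) + (j:ℕ) = n := Nat.sub_add_cancel j.is_le
      calc (q j).eval (RingHom.id ℂ) (x : ℂ) * (t : ℂ) ^ (n - (j : ℕ)) * Complex.cos (x:ℂ) ^ n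
          = (q j).eval (RingHom.id ℂ) (x : ℂ) * (t : ℂ) ^ (n - (j : ℕ))
            * (Complex.cos (x:ℂ) ^ (n - (j:ℕ)) * Complex.cos (x:ℂ) ^ (j:ℕ)) := by
            rw [← pow_add, this]
        _ = _ := by ring
    have hsum0 : ∑ j : Fin (n + 1),
        (q j).eval (RingHom.id ℂ) (x : ℂ) * (t : ℂ) ^ (n - (j : ℕ)) = 0 := by
      rcases mul_eq_zero.1 hsum with h' | h'
      · exact h'
      · exact absurd h' (pow_ne_zero _ hcosC)
    -- multiply by product of denominators
    show Polynomial.IsRoot _ (f m)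
    have hfm : f m = (x : ℂ) := rfl
    rw [Polynomial.IsRoot, hfm, Polynomial.eval_finset_sum]
    have hqe : ∀ j : Fin (n+1), (q j).eval (RingHom.id ℂ) (x : ℂ)
        = Polynomial.eval (x:ℂ) (q j).num / Polynomial.eval (x:ℂ) (q j).denom := by
      intro j; rfl
    have : ∀ j : Fin (n+1),
        Polynomial.eval (x:ℂ) (Polynomial.C ((t : ℂ) ^ (n - (j : ℕ))) * p j)
        = ((q j).eval (RingHom.id ℂ) (x : ℂ) * (t : ℂ) ^ (n - (j : ℕ)))
          * ∏ k : Fin (n+1), Polynomial.eval (x:ℂ) (q k).denom := by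
      intro j
      rw [hp]
      simp only [Polynomial.eval_mul, Polynomial.eval_C, Polynomial.eval_prod]
      rw [hqe j, div_mul_eq_mul_div, div_mul_eq_mul_div,
        ← Finset.mul_prod_erase Finset.univ (fun k => Polynomial.eval (x:ℂ) (q k).denom)
          (Finset.mem_univ j)]
      rw [eq_div_iff (hm j)]
      ring
    rw [Finset.sum_congr rfl fun j _ => this j, ← Finset.sum_mul, hsum0, zero_mul]
  -- Step 2: p j = 0 for all j
  have hpzero : ∀ j : Fin (n+1), p j = 0 := by
    intro j₀
    ext d
    -- consider polynomial in t
    set Q : Polynomial ℂ := ∑ j : Fin (n+1), Polynomial.C ((p j).coeff d) * Polynomial.X ^ (n - (j:ℕ)) with hQ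
    have hQ0 : Q = 0 := by
      apply Polynomial.eq_zero_of_infinite_isRoot
      apply Set.Infinite.mono (s := Set.range (fun t : ℝ => (t : ℂ)))
      · rintro z ⟨t, rfl⟩
        have := key t
        have hc := congrArg (fun P => Polynomial.coeff P d) this
        simp only [Polynomial.finset_sum_coeff, Polynomial.coeff_C_mul,
          Polynomial.coeff_zero] at hc
        rw [Set.mem_setOf_eq, Polynomial.IsRoot, hQ, Polynomial.eval_finset_sum]
        simp only [Polynomial.eval_mul, Polynomial.eval_C, Polynomial.eval_pow,
          Polynomial.eval_X]
        rw [← hc]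
        refine Finset.sum_congr rfl fun j _ => ?_
        ring
      · exact Set.infinite_range_of_injective Complex.ofReal_injective
    rw [hQ] at hQ0
    have hco := congrArg (fun P => Polynomial.coeff P (n - (j₀:ℕ))) hQ0
    simp only [Polynomial.finset_sum_coeff, Polynomial.coeff_C_mul,
      Polynomial.coeff_X_pow, Polynomial.coeff_zero, mul_ite, mul_one, mul_zero] at hco
    rw [Finset.sum_eq_single j₀] at hco
    · simpa using hco
    · intro j _ hj
      rw [if_neg]
      intro hEq
      have hj1 := j.is_le
      have hj2 := j₀.is_le
      exact hj (Fin.ext (by omega))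
    · simp
  intro j
  have := hpzero j
  rw [hp] at this
  rcases mul_eq_zero.1 this with h' | h'
  · exact RatFunc.num_eq_zero_iff.1 h'
  · exact absurd h' (Finset.prod_ne_zero_iff.2 fun k _ => RatFunc.denom_ne_zero _)
end

section
/- The characteristic function φ(t) = (1/√(2π)) ∫_{-∞}^∞ e^{-x²/2} e^{itx³} dx of the cube of a standard normal random variable satisfies the second-order ODE 27t³·φ''(t) + (81t² + 1)·φ'(t) + 15t·φ(t) = 0 for all real t. -/
open MeasureTheory

/-- The characteristic function of the cube of a standard normal random variable,
`φ(t) = (2π)^{-1/2} ∫_ℝ e^{-x²/2} e^{itx³} dx`. -/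
noncomputable def phiCube (t : ℝ) : ℂ :=
  (1 / (Real.sqrt (2 * Real.pi) : ℂ)) *
    ∫ x : ℝ, Complex.exp (-(x : ℂ) ^ 2 / 2 + Complex.I * (t : ℂ) * (x : ℂ) ^ 3)

/-!
Write `φ(t) = c ∫ e^{s_t(x)} dx` with `s_t(x) = -x²/2 + itx³`. Differentiating under the integral
sign, `φ^{(n)}(t) = c ∫ (ix³)ⁿ e^{s_t(x)} dx`, so the left-hand side of the ODE is
`c ∫ P_t(x) e^{s_t(x)} dx` with `P_t(x) = -27t³x⁶ + (81t² + 1)ix³ + 15t`. The Gaussian factor makes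
`∫ (g' + g s_t') e^{s_t} = ∫ (g e^{s_t})' = 0` for every polynomial `g`, and `P_t = g' + g s_t'` for
`g(x) = 9it²x⁴ + 3tx³ - ix² + 15tx - 2i`.
-/

open Complex Polynomial Filter

noncomputable section

namespace PhiCube

def kernel (t x : ℝ) : ℂ := cexp (-(x : ℂ) ^ 2 / 2 + I * t * x ^ 3)

lemma norm_kernel (t x : ℝ) : ‖kernel t x‖ = Real.exp (-2⁻¹ * x ^ 2) := by
  simp [kernel, norm_exp, ← ofReal_pow, div_eq_inv_mul]

lemma integrable_pow_mul_kernel (n : ℕ) (t : ℝ) :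
    Integrable fun x : ℝ => (x : ℂ) ^ n * kernel t x := by
  have hgauss : Integrable fun x : ℝ => x ^ n * Real.exp (-2⁻¹ * x ^ 2) := by
    simpa [Real.rpow_natCast] using integrable_rpow_mul_exp_neg_mul_sq (b := 2⁻¹) (by norm_num)
      (neg_one_lt_zero.trans_le n.cast_nonneg)
  refine hgauss.norm.mono' (by unfold kernel; fun_prop) (Eventually.of_forall fun x => ?_)
  simp [norm_kernel]

lemma integrable_eval_mul_kernel (p : ℂ[X]) (t : ℝ) :
    Integrable fun x : ℝ => p.eval (x : ℂ) * kernel t x := by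
  induction p using Polynomial.induction_on' with
  | add p q hp hq =>
    simp only [eval_add, add_mul]
    exact hp.add hq
  | monomial n a => simpa only [eval_monomial, mul_assoc] using
      (integrable_pow_mul_kernel n t).const_mul a

lemma hasDerivAt_kernel_param (t x : ℝ) :
    HasDerivAt (fun s => kernel s x) (I * x ^ 3 * kernel t x) t := by
  have h : HasDerivAt (fun z : ℂ => -(x : ℂ) ^ 2 / 2 + I * z * x ^ 3) (I * x ^ 3) t := by
    simpa using (((hasDerivAt_id (t : ℂ)).const_mul I).mul_const ((x : ℂ) ^ 3)).const_add
      (-(x : ℂ) ^ 2 / 2)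
  exact h.cexp.comp_ofReal.congr_deriv (mul_comm _ _)

lemma hasDerivAt_kernel (t x : ℝ) :
    HasDerivAt (kernel t) ((C (3 * I * t) * X ^ 2 - X).eval (x : ℂ) * kernel t x) x := by
  have h : HasDerivAt (fun z : ℂ => -z ^ 2 / 2 + I * t * z ^ 3)
      ((C (3 * I * t) * X ^ 2 - X).eval (x : ℂ)) x := by
    refine (((hasDerivAt_pow 2 (x : ℂ)).neg.div_const 2).add
      ((hasDerivAt_pow 3 (x : ℂ)).const_mul (I * t))).congr_deriv ?_
    simp only [eval_sub, eval_mul, eval_C, eval_pow, eval_X, Nat.cast_ofNat, Nat.add_one_sub_one,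
      pow_one]
    ring
  exact h.cexp.comp_ofReal.congr_deriv (mul_comm _ _)

def momentFunctional (t : ℝ) : ℂ[X] →ₗ[ℂ] ℂ where
  toFun p := ∫ x : ℝ, p.eval (x : ℂ) * kernel t x
  map_add' p q := by
    simp only [eval_add, add_mul]
    exact integral_add (integrable_eval_mul_kernel p t) (integrable_eval_mul_kernel q t)
  map_smul' a p := by
    simp only [eval_smul, smul_eq_mul, mul_assoc, RingHom.id_apply]
    exact integral_const_mul a _

lemma momentFunctional_apply (t : ℝ) (p : ℂ[X]) :
    momentFunctional t p = ∫ x : ℝ, p.eval (x : ℂ) * kernel t x := rfl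

lemma hasDerivAt_momentFunctional (p : ℂ[X]) (t : ℝ) :
    HasDerivAt (fun s => momentFunctional s p) (momentFunctional t (C I * X ^ 3 * p)) t := by
  have hderiv (s x : ℝ) : HasDerivAt (fun s => p.eval (x : ℂ) * kernel s x)
      ((C I * X ^ 3 * p).eval (x : ℂ) * kernel s x) s := by
    refine ((hasDerivAt_kernel_param s x).const_mul (p.eval (x : ℂ))).congr_deriv ?_
    simp only [eval_mul, eval_C, eval_X_pow]
    ring
  have hbound (s x : ℝ) : ‖(C I * X ^ 3 * p).eval (x : ℂ) * kernel s x‖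
      = ‖(C I * X ^ 3 * p).eval (x : ℂ) * kernel 0 x‖ := by
    simp only [norm_mul, norm_kernel]
  exact (hasDerivAt_integral_of_dominated_loc_of_deriv_le univ_mem
    (Eventually.of_forall fun s => (integrable_eval_mul_kernel p s).aestronglyMeasurable)
    (integrable_eval_mul_kernel p t) (integrable_eval_mul_kernel _ t).aestronglyMeasurable
    (Eventually.of_forall fun x s _ => (hbound s x).le) (integrable_eval_mul_kernel _ 0).norm
    (Eventually.of_forall fun x s _ => hderiv s x)).2

lemma momentFunctional_derivative_add_mul (p : ℂ[X]) (t : ℝ) :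
    momentFunctional t (derivative p + p * (C (3 * I * t) * X ^ 2 - X)) = 0 := by
  refine integral_eq_zero_of_hasDerivAt_of_integrable (fun x => ?_)
    (integrable_eval_mul_kernel _ t) (integrable_eval_mul_kernel p t)
  refine ((p.hasDerivAt (x : ℂ)).comp_ofReal.mul (hasDerivAt_kernel t x)).congr_deriv ?_
  simp only [eval_add, eval_mul]
  ring

lemma momentFunctional_ode (t : ℝ) :
    27 * (t : ℂ) ^ 3 * momentFunctional t (C I * X ^ 3 * (C I * X ^ 3 * 1))
      + (81 * (t : ℂ) ^ 2 + 1) * momentFunctional t (C I * X ^ 3 * 1)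
      + 15 * (t : ℂ) * momentFunctional t 1 = 0 := by
  set g : ℂ[X] := C (9 * I * t ^ 2) * X ^ 4 + C (3 * (t : ℂ)) * X ^ 3 - C I * X ^ 2
    + C (15 * (t : ℂ)) * X - C (2 * I)
  have hP : (27 * (t : ℂ) ^ 3) • (C I * X ^ 3 * (C I * X ^ 3 * 1))
      + (81 * (t : ℂ) ^ 2 + 1) • (C I * X ^ 3 * 1) + (15 * (t : ℂ)) • (1 : ℂ[X])
      = derivative g + g * (C (3 * I * t) * X ^ 2 - X) := by
    refine Polynomial.funext fun z => ?_
    simp only [g, derivative_add, derivative_sub, derivative_C_mul_X_pow, derivative_C_mul_X,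
      derivative_C, eval_add, eval_sub, eval_smul, eval_mul, eval_C, eval_pow, eval_X, eval_one,
      smul_eq_mul, mul_one, sub_zero, Nat.cast_ofNat, Nat.add_one_sub_one, pow_one]
    linear_combination (3 * (t : ℂ) * z ^ 4 + 6 * t * z ^ 2) * I_sq
  have h := momentFunctional_derivative_add_mul g t
  rw [← hP, map_add, map_add, map_smul, map_smul, map_smul] at h
  simpa only [smul_eq_mul] using h

lemma phiCube_eq :
    phiCube = fun t => 1 / (Real.sqrt (2 * Real.pi) : ℂ) * momentFunctional t 1 := by
  ext t
  simp [phiCube, momentFunctional_apply, kernel]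

end PhiCube

end

open PhiCube in
/-- `φ` satisfies the second-order ODE `27t³ φ'' + (81t² + 1) φ' + 15t φ = 0`. -/
theorem stmt_13 (t : ℝ) :
    27 * (t : ℂ) ^ 3 * deriv (deriv phiCube) t
      + (81 * (t : ℂ) ^ 2 + 1) * deriv phiCube t + 15 * (t : ℂ) * phiCube t = 0 := by
  set c : ℂ := 1 / (Real.sqrt (2 * Real.pi) : ℂ)
  have hφ' : deriv phiCube = fun s => c * momentFunctional s (C I * X ^ 3 * 1) := by
    rw [phiCube_eq]
    exact funext fun s => ((hasDerivAt_momentFunctional 1 s).const_mul c).deriv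
  have hφ'' :
      deriv (deriv phiCube) t = c * momentFunctional t (C I * X ^ 3 * (C I * X ^ 3 * 1)) := by
    rw [hφ']
    exact ((hasDerivAt_momentFunctional _ t).const_mul c).deriv
  rw [hφ'', hφ', phiCube_eq]
  linear_combination c * momentFunctional_ode t
end

section
/- For 0 < p < 1, ∫_0^∞ sin(x)/x^p dx = π / (2·Γ(p)·sin(pπ/2)) and ∫_0^∞ cos(x)/x^p dx = π / (2·Γ(p)·cos(pπ/2)), where the integrals are improper Riemann integrals. -/
open Real Filter intervalIntegral

open MeasureTheory Set

/-!
Write `x ^ (-p) = Γ(p)⁻¹ ∫₀^∞ t^(p-1) e^(-x t) dt` and swap the integrals (Fubini on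
`(0, T] × (0, ∞)`, where `x ^ (-p)` is integrable since `p < 1`). The inner integral
`∫₀^T e^(-t x) sin x dx = (1 - e^(-t T) (t sin T + cos T)) / (1 + t²)` is elementary, and so is
its cosine analogue with numerator `t`; the terms carrying `e^(-t T)` contribute `O(T^(-p))`.
What remains is the Mellin transform `∫₀^∞ t^(a-1) / (1 + t²) dt = π / (2 sin (a π / 2))` at
`a = p` and `a = p + 1`. It follows from `1 / (1 + t²) = ∫₀^∞ e^(-(1 + t²) s) ds`, a second swap
of integrals, and the reflection formula `Γ(a/2) Γ(1 - a/2) = π / sin (a π / 2)`.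
-/

lemma integral_rpow_mul_exp_neg_mul_eq_Gamma_mul {a r : ℝ} (ha : 0 < a) (hr : 0 < r) :
    ∫ t in Ioi (0 : ℝ), t ^ (a - 1) * exp (-(r * t)) = Gamma a * r ^ (-a) := by
  rw [integral_rpow_mul_exp_neg_mul_Ioi ha hr, one_div, inv_rpow hr.le, rpow_neg hr.le, mul_comm]

lemma integrableOn_rpow_mul_exp_neg_mul {a r : ℝ} (ha : 0 < a) (hr : 0 < r) :
    IntegrableOn (fun t : ℝ => t ^ (a - 1) * exp (-(r * t))) (Ioi 0) :=
  .of_integral_ne_zero (by rw [integral_rpow_mul_exp_neg_mul_Ioi ha hr]; positivity)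

lemma integral_exp_neg_mul_Ioi {r : ℝ} (hr : 0 < r) :
    ∫ s in Ioi (0 : ℝ), exp (-(r * s)) = r⁻¹ := by
  simpa using integral_rpow_mul_exp_neg_mul_Ioi one_pos hr

lemma rpow_mul_exp_neg_mul_one_add_sq (a s t : ℝ) :
    t ^ (a - 1) * exp (-((1 + t ^ 2) * s)) = exp (-s) * (t ^ (a - 1) * exp (-s * t ^ (2 : ℝ))) := by
  rw [rpow_two, mul_left_comm, ← exp_add]
  ring_nf

lemma integral_rpow_mul_exp_neg_mul_one_add_sq {a s : ℝ} (ha : 0 < a) (hs : 0 < s) :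
    ∫ t in Ioi (0 : ℝ), t ^ (a - 1) * exp (-((1 + t ^ 2) * s)) =
      exp (-s) * s ^ (-(a / 2)) * (Gamma (a / 2) / 2) := by
  simp_rw [rpow_mul_exp_neg_mul_one_add_sq, MeasureTheory.integral_const_mul,
    integral_rpow_mul_exp_neg_mul_rpow two_pos (by linarith : -1 < a - 1) hs]
  ring_nf

lemma integrableOn_rpow_mul_exp_neg_mul_one_add_sq {a s : ℝ} (ha : 0 < a) (hs : 0 < s) :
    IntegrableOn (fun t : ℝ => t ^ (a - 1) * exp (-((1 + t ^ 2) * s))) (Ioi 0) := by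
  simp_rw [rpow_mul_exp_neg_mul_one_add_sq]
  exact (integrableOn_rpow_mul_exp_neg_mul_rpow (by linarith) two_pos hs).const_mul _

lemma integral_rpow_div_one_add_sq {a : ℝ} (ha0 : 0 < a) (ha2 : a < 2) :
    ∫ t in Ioi (0 : ℝ), t ^ (a - 1) / (1 + t ^ 2) = π / (2 * sin (a * π / 2)) := by
  set f : ℝ → ℝ → ℝ := fun t s => t ^ (a - 1) * exp (-((1 + t ^ 2) * s))
  have hGamma : ∀ s ∈ Ioi (0 : ℝ), ∫ t in Ioi (0 : ℝ), f t s =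
      exp (-s) * s ^ ((1 - a / 2) - 1) * (Gamma (a / 2) / 2) := fun s hs => by
    rw [integral_rpow_mul_exp_neg_mul_one_add_sq ha0 hs, sub_sub_cancel_left]
  have hf : Integrable (Function.uncurry f)
      ((volume.restrict (Ioi 0)).prod (volume.restrict (Ioi 0))) := by
    refine (integrable_prod_iff' (by fun_prop)).2 ⟨?_, ?_⟩
    · filter_upwards [ae_restrict_mem measurableSet_Ioi] with s hs
      exact integrableOn_rpow_mul_exp_neg_mul_one_add_sq ha0 hs
    · have hconv := GammaIntegral_convergent (s := 1 - a / 2) (by linarith)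
      refine IntegrableOn.congr_fun (hconv.mul_const (Gamma (a / 2) / 2)) (fun s hs => ?_)
        measurableSet_Ioi
      rw [← hGamma s hs]
      refine setIntegral_congr_fun measurableSet_Ioi fun t (ht : 0 < t) => ?_
      exact (norm_of_nonneg (by positivity)).symm
  calc ∫ t in Ioi (0 : ℝ), t ^ (a - 1) / (1 + t ^ 2)
      = ∫ t in Ioi (0 : ℝ), ∫ s in Ioi (0 : ℝ), f t s :=
        setIntegral_congr_fun measurableSet_Ioi fun t _ => by
          rw [MeasureTheory.integral_const_mul, integral_exp_neg_mul_Ioi (by positivity),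
            div_eq_mul_inv]
    _ = ∫ s in Ioi (0 : ℝ), ∫ t in Ioi (0 : ℝ), f t s := integral_integral_swap hf
    _ = ∫ s in Ioi (0 : ℝ), exp (-s) * s ^ ((1 - a / 2) - 1) * (Gamma (a / 2) / 2) :=
        setIntegral_congr_fun measurableSet_Ioi hGamma
    _ = Gamma (a / 2) * Gamma (1 - a / 2) / 2 := by
        rw [MeasureTheory.integral_mul_const, ← Gamma_eq_integral (by linarith)]
        ring
    _ = π / (2 * sin (a * π / 2)) := by
        rw [Gamma_mul_Gamma_one_sub]
        ring_nf

lemma integral_div_rpow_eq_integral_laplace {p C T : ℝ} (hp0 : 0 < p) (hp1 : p < 1)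
    (hT : 0 ≤ T) {g : ℝ → ℝ} (hg : Measurable g) (hgC : ∀ x, |g x| ≤ C) :
    ∫ x in (0 : ℝ)..T, g x / x ^ p =
      (Gamma p)⁻¹ * ∫ t in Ioi (0 : ℝ), t ^ (p - 1) * ∫ x in (0 : ℝ)..T, exp (-(t * x)) * g x := by
  set f : ℝ → ℝ → ℝ := fun x t => g x * (t ^ (p - 1) * exp (-(x * t)))
  have hfx : ∀ x, 0 < x → ∫ t in Ioi (0 : ℝ), f x t = g x * (Gamma p * x ^ (-p)) :=
    fun x hx => by
      rw [MeasureTheory.integral_const_mul, integral_rpow_mul_exp_neg_mul_eq_Gamma_mul hp0 hx]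
  have hf_meas : AEStronglyMeasurable (Function.uncurry f)
      ((volume.restrict (Ioc 0 T)).prod (volume.restrict (Ioi 0))) :=
    Measurable.aestronglyMeasurable (by fun_prop)
  have hf : Integrable (Function.uncurry f)
      ((volume.restrict (Ioc 0 T)).prod (volume.restrict (Ioi 0))) := by
    refine (integrable_prod_iff hf_meas).2 ⟨?_, ?_⟩
    · filter_upwards [ae_restrict_mem measurableSet_Ioc] with x hx
      exact (integrableOn_rpow_mul_exp_neg_mul hp0 hx.1).const_mul (g x)
    · have hbound : IntegrableOn (fun x : ℝ => C * Gamma p * x ^ (-p)) (Ioc 0 T) :=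
        ((intervalIntegrable_rpow' (by linarith)).1).const_mul _
      refine hbound.mono' hf_meas.norm.integral_prod_right' ?_
      filter_upwards [ae_restrict_mem measurableSet_Ioc] with x hx
      have hnorm : ∫ t in Ioi (0 : ℝ), ‖f x t‖ = |g x| * (Gamma p * x ^ (-p)) := by
        rw [← integral_rpow_mul_exp_neg_mul_eq_Gamma_mul hp0 hx.1,
          ← MeasureTheory.integral_const_mul]
        refine setIntegral_congr_fun measurableSet_Ioi fun t (ht : 0 < t) => ?_
        rw [norm_mul, norm_eq_abs, norm_of_nonneg (by positivity)]
      rw [norm_of_nonneg (integral_nonneg fun _ => norm_nonneg _), Function.uncurry_def, hnorm,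
        mul_assoc]
      exact mul_le_mul_of_nonneg_right (hgC x)
        (mul_nonneg (Gamma_pos_of_pos hp0).le (rpow_nonneg hx.1.le _))
  rw [integral_of_le hT]
  calc ∫ x in Ioc 0 T, g x / x ^ p = ∫ x in Ioc 0 T, (Gamma p)⁻¹ * ∫ t in Ioi (0 : ℝ), f x t :=
        setIntegral_congr_fun measurableSet_Ioc fun x hx => by
          rw [hfx x hx.1, rpow_neg hx.1.le]; field_simp
    _ = (Gamma p)⁻¹ * ∫ t in Ioi (0 : ℝ), ∫ x in Ioc 0 T, f x t := by
        rw [MeasureTheory.integral_const_mul, integral_integral_swap hf]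
    _ = _ := by
        congr 1
        refine setIntegral_congr_fun measurableSet_Ioi fun t _ => ?_
        rw [integral_of_le hT, ← MeasureTheory.integral_const_mul]
        refine setIntegral_congr_fun measurableSet_Ioc fun x _ => ?_
        simp only [f]
        ring_nf

lemma abs_rpow_mul_exp_neg_mul_mul_le {p T K t : ℝ} (ht : 0 < t) {y : ℝ} (hy : |y| ≤ K) :
    |t ^ (p - 1) * (exp (-(T * t)) * y)| ≤ K * (t ^ (p - 1) * exp (-(T * t))) := by
  rw [abs_mul, abs_mul, abs_of_pos (rpow_pos_of_pos ht _), abs_of_pos (exp_pos _)]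
  nlinarith [mul_pos (rpow_pos_of_pos ht (p - 1)) (exp_pos (-(T * t)))]

lemma integrableOn_rpow_mul_exp_neg_mul_mul {p T K : ℝ} (hp : 0 < p) (hT : 0 < T) {k : ℝ → ℝ}
    (hk : Measurable k) (hkK : ∀ t, 0 < t → |k t| ≤ K) :
    IntegrableOn (fun t : ℝ => t ^ (p - 1) * (exp (-(T * t)) * k t)) (Ioi 0) := by
  refine ((integrableOn_rpow_mul_exp_neg_mul hp hT).const_mul K).mono'
    (Measurable.aestronglyMeasurable (by fun_prop)) ?_
  filter_upwards [ae_restrict_mem measurableSet_Ioi] with t (ht : 0 < t)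
  exact abs_rpow_mul_exp_neg_mul_mul_le ht (hkK t ht)

lemma tendsto_integral_rpow_mul_exp_neg_mul_mul_zero {p K : ℝ} (hp : 0 < p)
    {k : ℝ → ℝ → ℝ} (hkK : ∀ T t, 0 < t → |k T t| ≤ K) :
    Tendsto (fun T : ℝ => ∫ t in Ioi (0 : ℝ), t ^ (p - 1) * (exp (-(T * t)) * k T t)) atTop
      (nhds 0) := by
  have hbound : Tendsto (fun T : ℝ => K * (Gamma p * T ^ (-p))) atTop (nhds 0) := by
    simpa using ((tendsto_rpow_neg_atTop hp).const_mul (Gamma p)).const_mul K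
  refine squeeze_zero_norm' ?_ hbound
  filter_upwards [eventually_gt_atTop 0] with T hT
  rw [← integral_rpow_mul_exp_neg_mul_eq_Gamma_mul hp hT, ← MeasureTheory.integral_const_mul]
  refine norm_integral_le_of_norm_le ((integrableOn_rpow_mul_exp_neg_mul hp hT).const_mul K) ?_
  filter_upwards [ae_restrict_mem measurableSet_Ioi] with t (ht : 0 < t)
  exact abs_rpow_mul_exp_neg_mul_mul_le ht (hkK T t ht)

theorem tendsto_integral_div_rpow_of_laplace {p C K : ℝ} (hp0 : 0 < p) (hp1 : p < 1)
    {g A : ℝ → ℝ} {k : ℝ → ℝ → ℝ} (hg : Measurable g) (hgC : ∀ x, |g x| ≤ C)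
    (hk : ∀ T, Measurable (k T)) (hkK : ∀ T t, 0 < t → |k T t| ≤ K)
    (hA : IntegrableOn (fun t : ℝ => t ^ (p - 1) * A t) (Ioi 0))
    (hlaplace : ∀ T t : ℝ, 0 < T → 0 < t →
      ∫ x in (0 : ℝ)..T, exp (-(t * x)) * g x = A t + exp (-(T * t)) * k T t) :
    Tendsto (fun T : ℝ => ∫ x in (0 : ℝ)..T, g x / x ^ p) atTop
      (nhds ((Gamma p)⁻¹ * ∫ t in Ioi (0 : ℝ), t ^ (p - 1) * A t)) := by
  have hsplit : ∀ᶠ T in atTop, (Gamma p)⁻¹ * ((∫ t in Ioi (0 : ℝ), t ^ (p - 1) * A t) +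
      ∫ t in Ioi (0 : ℝ), t ^ (p - 1) * (exp (-(T * t)) * k T t)) =
        ∫ x in (0 : ℝ)..T, g x / x ^ p := by
    filter_upwards [eventually_gt_atTop 0] with T hT
    rw [integral_div_rpow_eq_integral_laplace hp0 hp1 hT.le hg hgC,
      ← integral_add hA (integrableOn_rpow_mul_exp_neg_mul_mul hp0 hT (hk T) (hkK T))]
    congr 1
    refine setIntegral_congr_fun measurableSet_Ioi fun t (ht : 0 < t) => ?_
    rw [hlaplace T t hT ht, mul_add]
  refine Tendsto.congr' hsplit ?_
  simpa using ((tendsto_integral_rpow_mul_exp_neg_mul_mul_zero hp0 hkK).const_add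
    (∫ t in Ioi (0 : ℝ), t ^ (p - 1) * A t)).const_mul (Gamma p)⁻¹

lemma integral_exp_neg_mul_mul_sin (t T : ℝ) :
    ∫ x in (0 : ℝ)..T, exp (-(t * x)) * sin x =
      (1 - exp (-(t * T)) * (t * sin T + cos T)) / (1 + t ^ 2) := by
  have hderiv : ∀ x : ℝ, HasDerivAt (fun x => -(exp (-(t * x)) * (t * sin x + cos x)) / (1 + t ^ 2))
      (exp (-(t * x)) * sin x) x := by
    intro x
    have hexp : HasDerivAt (fun x => exp (-(t * x))) (exp (-(t * x)) * -t) x := by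
      simpa using ((hasDerivAt_id x).const_mul t).neg.exp
    have h1t : 1 + t ^ 2 ≠ 0 := by positivity
    refine (((hexp.fun_mul (((hasDerivAt_sin x).const_mul t).fun_add
      (hasDerivAt_cos x))).fun_neg).div_const (1 + t ^ 2)).congr_deriv ?_
    field_simp
    ring
  rw [integral_eq_sub_of_hasDerivAt (fun x _ => hderiv x)
    (Continuous.intervalIntegrable (by fun_prop) _ _)]
  simp only [mul_zero, neg_zero, exp_zero, sin_zero, cos_zero]
  ring

lemma integral_exp_neg_mul_mul_cos (t T : ℝ) :
    ∫ x in (0 : ℝ)..T, exp (-(t * x)) * cos x =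
      (t + exp (-(t * T)) * (sin T - t * cos T)) / (1 + t ^ 2) := by
  have hderiv : ∀ x : ℝ, HasDerivAt (fun x => exp (-(t * x)) * (sin x - t * cos x) / (1 + t ^ 2))
      (exp (-(t * x)) * cos x) x := by
    intro x
    have hexp : HasDerivAt (fun x => exp (-(t * x))) (exp (-(t * x)) * -t) x := by
      simpa using ((hasDerivAt_id x).const_mul t).neg.exp
    have h1t : 1 + t ^ 2 ≠ 0 := by positivity
    refine ((hexp.fun_mul ((hasDerivAt_sin x).fun_sub
      ((hasDerivAt_cos x).const_mul t))).div_const (1 + t ^ 2)).congr_deriv ?_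
    field_simp
    ring
  rw [integral_eq_sub_of_hasDerivAt (fun x _ => hderiv x)
    (Continuous.intervalIntegrable (by fun_prop) _ _)]
  simp only [mul_zero, neg_zero, exp_zero, sin_zero, cos_zero]
  ring

lemma abs_mul_add_div_one_add_sq_le_one (t : ℝ) {u v : ℝ} (huv : u ^ 2 + v ^ 2 = 1) :
    |(t * u + v) / (1 + t ^ 2)| ≤ 1 := by
  have h1t : 0 < 1 + t ^ 2 := by positivity
  rw [abs_div, abs_of_pos h1t, div_le_one h1t, abs_le]
  -- Lagrange's identity: `(t u + v)² + (t v - u)² = (1 + t²)(u² + v²)`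
  constructor <;> nlinarith [sq_nonneg (t * u + v - 1), sq_nonneg (t * u + v + 1),
    sq_nonneg (t * v - u), sq_nonneg t]

theorem tendsto_integral_sin_div_rpow {p : ℝ} (hp0 : 0 < p) (hp1 : p < 1) :
    Tendsto (fun T : ℝ => ∫ x in (0 : ℝ)..T, sin x / x ^ p) atTop
      (nhds (π / (2 * Gamma p * sin (p * π / 2)))) := by
  have hsin : 0 < sin (p * π / 2) :=
    sin_pos_of_pos_of_lt_pi (by positivity) (by nlinarith [pi_pos])
  have hA : ∫ t in Ioi (0 : ℝ), t ^ (p - 1) * (1 + t ^ 2)⁻¹ = π / (2 * sin (p * π / 2)) :=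
    integral_rpow_div_one_add_sq hp0 (by linarith)
  have := tendsto_integral_div_rpow_of_laplace hp0 hp1 measurable_sin abs_sin_le_one
    (A := fun t => (1 + t ^ 2)⁻¹) (k := fun T t => -((t * sin T + cos T) / (1 + t ^ 2)))
    (by fun_prop)
    (fun T t _ => by
      rw [abs_neg]; exact abs_mul_add_div_one_add_sq_le_one t (sin_sq_add_cos_sq T))
    (.of_integral_ne_zero (by rw [hA]; positivity))
    (fun T t _ _ => by rw [integral_exp_neg_mul_mul_sin, mul_comm T]; ring)
  rwa [hA, ← div_eq_inv_mul, div_div, mul_right_comm] at this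

theorem tendsto_integral_cos_div_rpow {p : ℝ} (hp0 : 0 < p) (hp1 : p < 1) :
    Tendsto (fun T : ℝ => ∫ x in (0 : ℝ)..T, cos x / x ^ p) atTop
      (nhds (π / (2 * Gamma p * cos (p * π / 2)))) := by
  have hcos : 0 < cos (p * π / 2) :=
    cos_pos_of_mem_Ioo ⟨by nlinarith [pi_pos], by nlinarith [pi_pos]⟩
  have hA : ∫ t in Ioi (0 : ℝ), t ^ (p - 1) * (t / (1 + t ^ 2)) = π / (2 * cos (p * π / 2)) := by
    have h := integral_rpow_div_one_add_sq (a := p + 1) (by linarith) (by linarith)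
    rw [add_mul, add_div, one_mul, sin_add_pi_div_two] at h
    rw [← h]
    refine setIntegral_congr_fun measurableSet_Ioi fun t (ht : 0 < t) => ?_
    rw [add_sub_cancel_right, rpow_sub_one ht.ne']
    field_simp
  have := tendsto_integral_div_rpow_of_laplace hp0 hp1 measurable_cos abs_cos_le_one
    (A := fun t => t / (1 + t ^ 2)) (k := fun T t => (t * -cos T + sin T) / (1 + t ^ 2))
    (by fun_prop)
    (fun T t _ => abs_mul_add_div_one_add_sq_le_one t (by rw [neg_sq]; exact cos_sq_add_sin_sq T))
    (.of_integral_ne_zero (by rw [hA]; positivity))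
    (fun T t _ _ => by rw [integral_exp_neg_mul_mul_cos, mul_comm T]; ring)
  rwa [hA, ← div_eq_inv_mul, div_div, mul_right_comm] at this

/-- For `0 < p < 1`, `∫_0^∞ sin x / x^p dx = π/(2 Γ(p) sin(pπ/2))` and
`∫_0^∞ cos x / x^p dx = π/(2 Γ(p) cos(pπ/2))`, as improper (limit of `∫_0^T`) integrals. -/
theorem stmt_16 (p : ℝ) (hp0 : 0 < p) (hp1 : p < 1) :
    Tendsto (fun T : ℝ => ∫ x in (0 : ℝ)..T, Real.sin x / x ^ p) atTop
      (nhds (π / (2 * Real.Gamma p * Real.sin (p * π / 2)))) ∧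
    Tendsto (fun T : ℝ => ∫ x in (0 : ℝ)..T, Real.cos x / x ^ p) atTop
      (nhds (π / (2 * Real.Gamma p * Real.cos (p * π / 2)))) :=
  ⟨tendsto_integral_sin_div_rpow hp0 hp1, tendsto_integral_cos_div_rpow hp0 hp1⟩
end
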